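/- For every x ∈ ℝ^d and every k ∈ ℤ, the number of lattice points b ∈ 2^{−k/d} ℤ^d such that ψ_{k,b}(x) ≠ 0 is at most 12^d. -/

import Mathlib

open MeasureTheory

/-- The rectifier (ReLU) function. -/
noncomputable def rect (x : ℝ) : ℝ := max 0 x

/-- The trapezoid function `t`: equal to 2 on [-1,1], vanishing outside (-3,3), linear between. -/
noncomputable def trap (x : ℝ) : ℝ := rect (x + 3) - rect (x + 1) - rect (x - 1) + rect (x - 3)

/-- The scaling ("father") function `φ(x) = C_d · rect(Σ_j t(x_j) − 2(d−1))` on `ℝ^d`. -/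
noncomputable def scalingFn (d : ℕ) (Cd : ℝ) (x : EuclideanSpace ℝ (Fin d)) : ℝ :=
  Cd * rect ((∑ j, trap (x j)) - 2 * ((d : ℝ) - 1))

/-- The ("mother") wavelet `ψ(x) = φ(x) − 2⁻¹ φ(2^{−1/d} x)`. -/
noncomputable def psiFn (d : ℕ) (Cd : ℝ) (x : EuclideanSpace ℝ (Fin d)) : ℝ :=
  scalingFn d Cd x - 2⁻¹ * scalingFn d Cd (((2 : ℝ) ^ (-(1 : ℝ) / d)) • x)

/-- The wavelet term `ψ_{k,b}(x) = 2^{k/2} ψ(2^{k/d}(x − b))`. -/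
noncomputable def psikb (d : ℕ) (Cd : ℝ) (k : ℤ) (b x : EuclideanSpace ℝ (Fin d)) : ℝ :=
  (2 : ℝ) ^ ((k : ℝ) / 2) * psiFn d Cd (((2 : ℝ) ^ ((k : ℝ) / d)) • (x - b))

/-!
Since `t ≤ 2` everywhere and `t = 0` off `(-3, 3)`, the argument of `rect` in `φ(z)` is `≤ 0` as
soon as one coordinate of `z` leaves `(-3, 3)`; so `φ` is supported in the open cube of
half-width `3`, and `ψ` in the cube of half-width `3 · 2^{1/d} ≤ 6`. Hence `ψ_{k,b}(x) ≠ 0` forces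
`|2^{k/d} x_j - n_j| < 6` for the integer coordinates `n` of `b = 2^{-k/d} n`, which leaves at most
`12` choices for each `n_j`.
-/

lemma trap_le_two (x : ℝ) : trap x ≤ 2 := by
  simp only [trap, rect]
  grind

lemma trap_eq_zero_of_three_le_abs {x : ℝ} (h : 3 ≤ |x|) : trap x = 0 := by
  simp only [trap, rect]
  rcases le_abs'.mp h with hx | hx <;> grind

lemma scalingFn_eq_zero_of_three_le_abs {d : ℕ} (Cd : ℝ) {z : EuclideanSpace ℝ (Fin d)}
    {j : Fin d} (hj : 3 ≤ |z j|) : scalingFn d Cd z = 0 := by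
  have hsum : ∑ i, trap (z i) ≤ 2 * ((d : ℝ) - 1) :=
    calc ∑ i, trap (z i) = ∑ i ∈ Finset.univ.erase j, trap (z i) := by
          rw [← Finset.add_sum_erase _ _ (Finset.mem_univ j), trap_eq_zero_of_three_le_abs hj,
            zero_add]
      _ ≤ ∑ _i ∈ Finset.univ.erase j, (2 : ℝ) := Finset.sum_le_sum fun i _ => trap_le_two _
      _ = 2 * ((d : ℝ) - 1) := by
          rw [Finset.sum_const, Finset.card_erase_of_mem (Finset.mem_univ j), Finset.card_univ,
            Fintype.card_fin, nsmul_eq_mul, Nat.cast_pred (Fin.pos j)]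
          ring
  rw [scalingFn, rect, max_eq_left (by linarith), mul_zero]

lemma abs_lt_three_of_scalingFn_ne_zero {d : ℕ} {Cd : ℝ} {z : EuclideanSpace ℝ (Fin d)}
    (h : scalingFn d Cd z ≠ 0) (j : Fin d) : |z j| < 3 :=
  not_le.mp fun hj => h (scalingFn_eq_zero_of_three_le_abs Cd hj)

lemma two_rpow_one_div_natCast_le_two (d : ℕ) : (2 : ℝ) ^ ((1 : ℝ) / d) ≤ 2 := by
  rcases Nat.eq_zero_or_pos d with rfl | hd
  · norm_num
  · calc (2 : ℝ) ^ ((1 : ℝ) / d) ≤ 2 ^ (1 : ℝ) :=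
          Real.rpow_le_rpow_of_exponent_le one_le_two
            (div_le_one_of_le₀ (by exact_mod_cast hd) (Nat.cast_nonneg d))
      _ = 2 := Real.rpow_one 2

lemma abs_lt_six_of_psiFn_ne_zero {d : ℕ} {Cd : ℝ} {y : EuclideanSpace ℝ (Fin d)}
    (h : psiFn d Cd y ≠ 0) (j : Fin d) : |y j| < 6 := by
  have hφ : scalingFn d Cd y ≠ 0 ∨ scalingFn d Cd ((2 : ℝ) ^ (-(1 : ℝ) / d) • y) ≠ 0 := by
    by_contra! hφ
    exact h (by rw [psiFn, hφ.1, hφ.2]; ring)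
  rcases hφ with hφ | hφ
  · linarith [abs_lt_three_of_scalingFn_ne_zero hφ j]
  · set a : ℝ := (2 : ℝ) ^ ((1 : ℝ) / d)
    have ha : 0 < a := Real.rpow_pos_of_pos two_pos _
    have h3 := abs_lt_three_of_scalingFn_ne_zero hφ j
    rw [PiLp.smul_apply, smul_eq_mul, neg_div, Real.rpow_neg zero_le_two, abs_mul,
      abs_inv, abs_of_pos ha, inv_mul_lt_iff₀ ha] at h3
    linarith [two_rpow_one_div_natCast_le_two d]

lemma abs_lt_six_of_psikb_ne_zero {d : ℕ} {Cd : ℝ} {k : ℤ} {b x : EuclideanSpace ℝ (Fin d)}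
    (h : psikb d Cd k b x ≠ 0) (j : Fin d) : |(2 : ℝ) ^ ((k : ℝ) / d) * (x j - b j)| < 6 :=
  abs_lt_six_of_psiFn_ne_zero (right_ne_zero_of_mul h) j

lemma Int.setOf_abs_sub_lt_subset_Icc (c : ℝ) (m : ℕ) :
    {n : ℤ | |c - n| < m} ⊆ Finset.Icc (⌊c⌋ - m + 1) (⌊c⌋ + m) := by
  intro n hn
  rw [Set.mem_ofPred_eq, abs_lt] at hn
  have hlo : (⌊c⌋ : ℝ) - m < n := by linarith [Int.floor_le c]
  have hhi : (n : ℝ) < ⌊c⌋ + m + 1 := by linarith [Int.lt_floor_add_one c]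
  rw [Finset.coe_Icc, Set.mem_Icc]
  constructor
  · exact Int.add_one_le_of_lt (by exact_mod_cast hlo)
  · exact Int.lt_add_one_iff.mp (by exact_mod_cast hhi)

lemma finite_and_ncard_le_setOf_abs_sub_lt {ι : Type*} [Fintype ι] (c : ι → ℝ) (m : ℕ) :
    {n : ι → ℤ | ∀ j, |c j - n j| < m}.Finite ∧
      {n : ι → ℤ | ∀ j, |c j - n j| < m}.ncard ≤ (2 * m) ^ Fintype.card ι := by
  classical
  set box := Fintype.piFinset fun j => Finset.Icc (⌊c j⌋ - m + 1) (⌊c j⌋ + m)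
  have hsub : {n : ι → ℤ | ∀ j, |c j - n j| < m} ⊆ box := fun n hn => by
    rw [Finset.mem_coe, Fintype.mem_piFinset]
    exact fun j => Int.setOf_abs_sub_lt_subset_Icc (c j) m (hn j)
  have hbox : box.card = (2 * m) ^ Fintype.card ι := by
    have hIcc (j : ι) : (Finset.Icc (⌊c j⌋ - m + 1) (⌊c j⌋ + m)).card = 2 * m := by
      rw [Int.card_Icc]
      omega
    simp only [box, Fintype.card_piFinset, hIcc, Finset.prod_const, Finset.card_univ]
  refine ⟨box.finite_toSet.subset hsub, ?_⟩
  calc _ ≤ (box : Set (ι → ℤ)).ncard := Set.ncard_le_ncard hsub box.finite_toSet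
    _ = _ := by rw [Set.ncard_coe_finset, hbox]

theorem statement8_general (d : ℕ) (Cd : ℝ)
    (x : EuclideanSpace ℝ (Fin d)) (k : ℤ) :
    {b : EuclideanSpace ℝ (Fin d) |
        (∀ j, ∃ n : ℤ, b j = (n : ℝ) * (2 : ℝ) ^ (-(k : ℝ) / d)) ∧
        psikb d Cd k b x ≠ 0}.Finite ∧
    {b : EuclideanSpace ℝ (Fin d) |
        (∀ j, ∃ n : ℤ, b j = (n : ℝ) * (2 : ℝ) ^ (-(k : ℝ) / d)) ∧
        psikb d Cd k b x ≠ 0}.ncard ≤ 12 ^ d := by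
  set q : ℝ := (2 : ℝ) ^ ((k : ℝ) / d)
  set p : ℝ := (2 : ℝ) ^ (-(k : ℝ) / d)
  have hqp : q * p = 1 := by
    rw [← Real.rpow_add two_pos, ← add_div, add_neg_cancel, zero_div, Real.rpow_zero]
  obtain ⟨hfin, hcard⟩ := finite_and_ncard_le_setOf_abs_sub_lt (fun j => q * x j) 6
  set lattice : (Fin d → ℤ) → EuclideanSpace ℝ (Fin d) := fun n => WithLp.toLp 2 fun j => n j * p
  have hsub : {b : EuclideanSpace ℝ (Fin d) |
      (∀ j, ∃ n : ℤ, b j = (n : ℝ) * p) ∧ psikb d Cd k b x ≠ 0} ⊆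
      lattice '' {n : Fin d → ℤ | ∀ j, |q * x j - n j| < (6 : ℕ)} := by
    rintro b ⟨hlat, hb⟩
    choose n hn using hlat
    refine ⟨n, fun j => ?_, by ext j; exact (hn j).symm⟩
    have hqb : q * b j = n j := by rw [hn j, mul_left_comm, hqp, mul_one]
    simpa [← hqb, mul_sub] using abs_lt_six_of_psikb_ne_zero hb j
  refine ⟨(hfin.image lattice).subset hsub, ?_⟩
  calc _ ≤ (lattice '' _).ncard := Set.ncard_le_ncard hsub (hfin.image lattice)
    _ ≤ _ := Set.ncard_image_le hfin
    _ ≤ 12 ^ d := by simpa using hcard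

/-- at every scale `k`, at most `12^d` lattice points `b ∈ 2^{−k/d}ℤ^d`
have `ψ_{k,b}(x) ≠ 0`. -/
theorem statement8 (d : ℕ) (hd : 1 ≤ d) (Cd : ℝ) (hCd : 0 < Cd)
    (hnorm : ∫ x : EuclideanSpace ℝ (Fin d), scalingFn d Cd x = 1)
    (x : EuclideanSpace ℝ (Fin d)) (k : ℤ) :
    {b : EuclideanSpace ℝ (Fin d) |
        (∀ j, ∃ n : ℤ, b j = (n : ℝ) * (2 : ℝ) ^ (-(k : ℝ) / d)) ∧
        psikb d Cd k b x ≠ 0}.Finite ∧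
    {b : EuclideanSpace ℝ (Fin d) |
        (∀ j, ∃ n : ℤ, b j = (n : ℝ) * (2 : ℝ) ^ (-(k : ℝ) / d)) ∧
        psikb d Cd k b x ≠ 0}.ncard ≤ 12 ^ d :=
  statement8_general d Cd x k
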